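/- Let R be a commutative ring. The category of functors from (ℤ, ≤)^op to R-modules (i.e. ℤ-indexed decreasing filtered diagrams ⋯ → X^1 → X^0 → X^{-1} → ⋯ of R-modules) is equivalent to the category of ℤ-graded modules over the ℤ-graded ring R[t] where t has degree −1. -/

import Mathlib

open CategoryTheory

universe u

/-- A ℤ-graded module over the ℤ-graded ring `R[t]` with `t` in degree `-1`:
a ℤ-graded `R`-module `(Mⁿ)` together with `R`-linear maps `t : Mⁿ → Mⁿ⁻¹`
giving the action of `t`. -/
structure GradedReesModule (R : Type u) [CommRing R] : Type (u + 1) where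
  piece : ℤ → ModuleCat.{u} R
  t : ∀ n : ℤ, piece n ⟶ piece (n - 1)

/-- Morphisms of graded `R[t]`-modules: degreewise `R`-linear maps commuting with the
action of `t`. -/
@[ext]
structure GradedReesModuleHom {R : Type u} [CommRing R] (X Y : GradedReesModule R) where
  f : ∀ n : ℤ, X.piece n ⟶ Y.piece n
  comm : ∀ n : ℤ, X.t n ≫ f (n - 1) = f n ≫ Y.t n

instance (R : Type u) [CommRing R] : Category (GradedReesModule R) where
  Hom X Y := GradedReesModuleHom X Y
  id X := ⟨fun _ => 𝟙 _, by intro n; simp⟩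
  comp φ ψ := ⟨fun n => φ.f n ≫ ψ.f n, by
    intro n
    rw [← Category.assoc, φ.comm n, Category.assoc, ψ.comm n, Category.assoc]⟩
  id_comp φ := by apply GradedReesModuleHom.ext; funext n; simp
  comp_id φ := by apply GradedReesModuleHom.ext; funext n; simp
  assoc φ ψ χ := by apply GradedReesModuleHom.ext; funext n; simp

/-!
A functor out of `ℤᵒᵖ` is freely determined by its values on the generating morphisms
`n ⟶ n - 1`: any family `Xⁿ ⟶ Xⁿ⁻¹` extends to a functor by composing, and naturality
needs only to be checked on these generators. Hence restricting a filtered diagram to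
its transition maps `Xⁿ ⟶ Xⁿ⁻¹` is full, faithful and essentially surjective.
-/

namespace CategoryTheory

variable {C : Type*} [Category* C]

namespace Functor

variable {X : ℤ → C} (t : ∀ n, X n ⟶ X (n - 1))

namespace OfIntOpSequence

def map (n : ℤ) : ∀ m, m ≤ n → (X n ⟶ X m) :=
  Int.leInductionDown (𝟙 _) fun m _ f => f ≫ t m

lemma map_self (n : ℤ) : map t n n le_rfl = 𝟙 _ :=
  Int.leInductionDown_base _ _

lemma map_sub_one (n m : ℤ) (h : m ≤ n) :
    map t n (m - 1) (by lia) = map t n m h ≫ t m :=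
  Int.leInductionDown_sub_one _ _ m h

lemma map_comp (n m p : ℤ) (hmn : m ≤ n) (hpm : p ≤ m) :
    map t n p (hpm.trans hmn) = map t n m hmn ≫ map t m p hpm := by
  induction p, hpm using Int.leInductionDown with
  | base => rw [map_self, Category.comp_id]
  | pred p hpm ih => rw [map_sub_one t n p (hpm.trans hmn), map_sub_one t m p hpm, ih,
      Category.assoc]

end OfIntOpSequence

def ofIntOpSequence : ℤᵒᵖ ⥤ C where
  obj n := X n.unop
  map f := OfIntOpSequence.map t _ _ (leOfHom f.unop)
  map_id n := OfIntOpSequence.map_self t n.unop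
  map_comp f g := OfIntOpSequence.map_comp t _ _ _ (leOfHom f.unop) (leOfHom g.unop)

@[simp]
lemma ofIntOpSequence_map_homOfLE_sub_one (n : ℤ) :
    (ofIntOpSequence t).map (homOfLE ((sub_one_lt n).le)).op = t n := by
  change OfIntOpSequence.map t n (n - 1) _ = t n
  rw [OfIntOpSequence.map_sub_one t n n le_rfl, OfIntOpSequence.map_self, Category.id_comp]

end Functor

namespace NatTrans

def ofIntOpSequence {F G : ℤᵒᵖ ⥤ C} (app : ∀ n : ℤ, F.obj (.op n) ⟶ G.obj (.op n))
    (naturality : ∀ n : ℤ, F.map (homOfLE ((sub_one_lt n).le)).op ≫ app (n - 1) =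
      app n ≫ G.map (homOfLE ((sub_one_lt n).le)).op) : F ⟶ G where
  app n := app n.unop
  naturality := by
    rintro ⟨n⟩ ⟨m⟩ f
    obtain ⟨hmn, rfl⟩ : ∃ h : m ≤ n, f = (homOfLE h).op :=
      ⟨leOfHom f.unop, Subsingleton.elim _ _⟩
    induction m, hmn using Int.leInductionDown with
    | base => simp
    | pred m hmn ih =>
      have hcomp : (homOfLE (show m - 1 ≤ n by lia)).op =
          (homOfLE hmn).op ≫ (homOfLE ((sub_one_lt m).le)).op := rfl
      rw [hcomp, F.map_comp, G.map_comp, Category.assoc, naturality, ← Category.assoc, ih,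
        Category.assoc]

end NatTrans

end CategoryTheory

open CategoryTheory

namespace GradedReesModule

variable (R : Type u) [CommRing R]

/-- The Rees construction. -/
noncomputable def ofFiltered : (ℤᵒᵖ ⥤ ModuleCat.{u} R) ⥤ GradedReesModule R where
  obj F :=
    { piece n := F.obj (.op n)
      t n := F.map (homOfLE ((sub_one_lt n).le)).op }
  map α :=
    { f n := α.app (.op n)
      comm n := α.naturality _ }

instance : (ofFiltered R).Faithful where
  map_injective h :=
    NatTrans.ext <| funext fun n => congr_fun (congrArg GradedReesModuleHom.f h) n.unop

instance : (ofFiltered R).Full where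
  map_surjective φ := ⟨NatTrans.ofIntOpSequence φ.f φ.comm, rfl⟩

lemma ofFiltered_obj_ofIntOpSequence (M : GradedReesModule R) :
    (ofFiltered R).obj (Functor.ofIntOpSequence M.t) = M := by
  cases M
  simp only [ofFiltered, Functor.ofIntOpSequence_map_homOfLE_sub_one]
  rfl

instance : (ofFiltered R).EssSurj where
  mem_essImage M := ⟨_, ⟨eqToIso (ofFiltered_obj_ofIntOpSequence R M)⟩⟩

instance : (ofFiltered R).IsEquivalence where

end GradedReesModule

/-- The category of ℤ-indexed decreasing filtered diagrams
`⋯ → X¹ → X⁰ → X⁻¹ → ⋯` of `R`-modules (functors `(ℤ, ≤)ᵒᵖ → Mod_R`) is equivalent to the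
category of ℤ-graded modules over the ℤ-graded ring `R[t]`, `t` of degree `-1`
(the Rees construction). -/
theorem filtered_equiv_gradedReesModule (R : Type u) [CommRing R] :
    Nonempty ((ℤᵒᵖ ⥤ ModuleCat.{u} R) ≌ GradedReesModule R) :=
  ⟨(GradedReesModule.ofFiltered R).asEquivalence⟩
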